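/- arXiv:2309.08034 — 2 statements merged into one kernel-verified Lean document; each statement's English description precedes it below -/
import Mathlib

section
/- Let σ = co{x₀, x₁, …, xₙ} ⊂ ℝⁿ be an n-simplex (the convex hull of n+1 affinely independent points), and let g : U → ℝⁿ be twice continuously differentiable on an open set U containing σ. Let β ≥ max over p,q,r ∈ {1,…,n} and ξ ∈ σ of |∂²g⁽ᵖ⁾/∂x⁽q⁾∂x⁽r⁾ evaluated at ξ|, and for each j ∈ {0,…,n} set c_j = n‖x_j − x₀‖₂ (max_{k∈{1,…,n}} ‖x_k − x₀‖₂ + ‖x_j − x₀‖₂). Then for every x ∈ σ, writing x = Σ_{j=0}^{n} λ_j x_j with λ_j ≥ 0 and Σ_{j=0}^{n} λ_j = 1, one has ‖g(x) − Σ_{j=0}^{n} λ_j g(x_j)‖_∞ ≤ (1/2) β Σ_{j=0}^{n} λ_j c_j. -/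
open Matrix

noncomputable def enorm2 {n : ℕ} (x : Fin n → ℝ) : ℝ := Real.sqrt (∑ i, x i ^ 2)

/-- Second partial derivative `∂²f/∂x⁽q⁾∂x⁽r⁾` of `f : ℝⁿ → ℝ` at `ξ`. -/
noncomputable def pd2 {n : ℕ} (f : (Fin n → ℝ) → ℝ) (q r : Fin n) (ξ : Fin n → ℝ) : ℝ :=
  fderiv ℝ (fun y => fderiv ℝ f y (Pi.single q 1)) ξ (Pi.single r 1)

open Set

/-! Each component `f = g⁽ᵖ⁾` is compared with its first-order Taylor polynomial at `x₀`.
Interpolation at the vertices reproduces affine functions exactly, so the interpolation error of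
`f` equals that of the Taylor remainder `R`, namely `R(x) − Σ λ_j R(x_j)`. The second-order
Taylor estimate along a segment, with the Hessian bounded entrywise by `β`, gives
`|R(z)| ≤ ½ β ‖z − x₀‖₁² ≤ ½ β n ‖z − x₀‖₂²`. At a vertex this is `½ β n ‖x_j − x₀‖₂²`; at `x`,
convexity of the norm gives `‖x − x₀‖₂ ≤ Σ λ_j ‖x_j − x₀‖₂ ≤ max_k ‖x_k − x₀‖₂`. -/

theorem norm_sub_sub_deriv_le_of_norm_deriv2_le {E : Type*} [NormedAddCommGroup E]
    [NormedSpace ℝ E] {φ φ' φ'' : ℝ → E} {K : ℝ}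
    (hφ : ∀ t ∈ Icc (0 : ℝ) 1, HasDerivAt φ (φ' t) t)
    (hφ' : ∀ t ∈ Icc (0 : ℝ) 1, HasDerivAt φ' (φ'' t) t)
    (hK : ∀ t ∈ Icc (0 : ℝ) 1, ‖φ'' t‖ ≤ K) :
    ‖φ 1 - φ 0 - φ' 0‖ ≤ K / 2 := by
  have hφ'_lip : ∀ t ∈ Icc (0 : ℝ) 1, ‖φ' t - φ' 0‖ ≤ K * (t - 0) :=
    norm_image_sub_le_of_norm_deriv_le_segment' (fun t ht => (hφ' t ht).hasDerivWithinAt)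
      fun t ht => hK t (Ico_subset_Icc_self ht)
  have hB : ∀ t, HasDerivAt (fun t : ℝ => K / 2 * t ^ 2) (K * t) t := fun t => by
    refine ((hasDerivAt_pow 2 t).const_mul (K / 2)).congr_deriv ?_
    norm_num
    ring
  have hf : ∀ t ∈ Icc (0 : ℝ) 1,
      HasDerivAt (fun t => φ t - φ 0 - t • φ' 0) (φ' t - φ' 0) t := fun t ht =>
    (((hφ t ht).sub_const (φ 0)).sub ((hasDerivAt_id t).smul_const (φ' 0))).congr_deriv
      (by rw [one_smul])
  simpa using image_norm_le_of_norm_deriv_right_le_deriv_boundary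
    (fun t ht => (hf t ht).continuousAt.continuousWithinAt)
    (fun t ht => (hf t (Ico_subset_Icc_self ht)).hasDerivWithinAt) (by simp) hB
    (fun t ht => by simpa using hφ'_lip t (Ico_subset_Icc_self ht)) (right_mem_Icc.2 zero_le_one)

theorem norm_sub_sub_fderiv_le_of_norm_fderiv_fderiv_le {E F : Type*} [NormedAddCommGroup E]
    [NormedSpace ℝ E] [NormedAddCommGroup F] [NormedSpace ℝ F] {h : E → F} {U : Set E}
    (hU : IsOpen U) (hh : ContDiffOn ℝ 2 h U) {a b : E} (hab : segment ℝ a b ⊆ U) {K : ℝ}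
    (hK : ∀ ξ ∈ segment ℝ a b, ‖fderiv ℝ (fderiv ℝ h) ξ (b - a) (b - a)‖ ≤ K) :
    ‖h b - h a - fderiv ℝ h a (b - a)‖ ≤ K / 2 := by
  set γ : ℝ → E := fun t => a + t • (b - a)
  have hγ : ∀ t, HasDerivAt γ (b - a) t := fun t =>
    (((hasDerivAt_id t).smul_const (b - a)).const_add a).congr_deriv (one_smul ℝ _)
  have hγ_mem : ∀ t ∈ Icc (0 : ℝ) 1, γ t ∈ segment ℝ a b := fun t ht => by
    rw [segment_eq_image']; exact ⟨t, ht, rfl⟩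
  have hDh : ∀ ξ ∈ U, HasFDerivAt h (fderiv ℝ h ξ) ξ := fun ξ hξ =>
    ((hh.differentiableOn two_ne_zero).differentiableAt (hU.mem_nhds hξ)).hasFDerivAt
  have hD2h : ∀ ξ ∈ U, HasFDerivAt (fderiv ℝ h) (fderiv ℝ (fderiv ℝ h) ξ) ξ := fun ξ hξ =>
    (((hh.fderiv_of_isOpen hU le_rfl).differentiableOn one_ne_zero).differentiableAt
      (hU.mem_nhds hξ)).hasFDerivAt
  simpa [γ] using norm_sub_sub_deriv_le_of_norm_deriv2_le (φ := h ∘ γ)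
    (fun t ht => (hDh _ (hab (hγ_mem t ht))).comp_hasDerivAt t (hγ t))
    (fun t ht => ((ContinuousLinearMap.apply ℝ F (b - a)).hasFDerivAt.comp_hasDerivAt t
      ((hD2h _ (hab (hγ_mem t ht))).comp_hasDerivAt t (hγ t))))
    (fun t ht => hK _ (hγ_mem t ht))

theorem sub_sum_smul_eq_sub_sum_smul_remainder {𝕜 E F ι : Type*} [Ring 𝕜] [AddCommGroup E]
    [Module 𝕜 E] [AddCommGroup F] [Module 𝕜 F] [Fintype ι] (h : E → F) (L : E →ₗ[𝕜] F) (a : E)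
    (x : ι → E) (lam : ι → 𝕜) (hlam1 : ∑ j, lam j = 1) :
    h (∑ j, lam j • x j) - ∑ j, lam j • h (x j) =
      (h (∑ j, lam j • x j) - h a - L (∑ j, lam j • x j - a)) -
        ∑ j, lam j • (h (x j) - h a - L (x j - a)) := by
  simp [smul_sub, Finset.sum_sub_distrib, ← Finset.sum_smul, hlam1]

theorem enorm2_eq_norm_toLp {n : ℕ} (w : Fin n → ℝ) :
    enorm2 w = ‖(WithLp.toLp 2 w : EuclideanSpace ℝ (Fin n))‖ := by
  simp [enorm2, EuclideanSpace.norm_eq]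

theorem enorm2_nonneg {n : ℕ} (w : Fin n → ℝ) : 0 ≤ enorm2 w := Real.sqrt_nonneg _

theorem enorm2_sum_smul_sub_le {n : ℕ} {ι : Type*} [Fintype ι] (lam : ι → ℝ)
    (hlam0 : ∀ j, 0 ≤ lam j) (hlam1 : ∑ j, lam j = 1) (x : ι → Fin n → ℝ) (a : Fin n → ℝ) :
    enorm2 (∑ j, lam j • x j - a) ≤ ∑ j, lam j * enorm2 (x j - a) := by
  have : ∑ j, lam j • x j - a = ∑ j, lam j • (x j - a) := by
    simp [smul_sub, Finset.sum_sub_distrib, ← Finset.sum_smul, hlam1]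
  simp_rw [this, enorm2_eq_norm_toLp, WithLp.toLp_sum, WithLp.toLp_smul]
  refine (norm_sum_le _ _).trans_eq (Finset.sum_congr rfl fun j _ => ?_)
  rw [norm_smul, Real.norm_of_nonneg (hlam0 j)]

theorem sq_sum_abs_le_card_mul_enorm2_sq {n : ℕ} (w : Fin n → ℝ) :
    (∑ q, |w q|) ^ 2 ≤ n * enorm2 w ^ 2 := by
  rw [enorm2, Real.sq_sqrt (by positivity)]
  simpa using sq_sum_le_card_mul_sum_sq (s := Finset.univ) (f := fun q => |w q|)

theorem enorm2_sub_le_iSup {n : ℕ} (x : Fin (n + 1) → Fin n → ℝ) (j : Fin (n + 1)) :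
    enorm2 (x j - x 0) ≤ ⨆ k : Fin n, enorm2 (x k.succ - x 0) := by
  induction j using Fin.cases with
  | zero => simpa [enorm2] using Real.iSup_nonneg fun k => enorm2_nonneg _
  | succ k => exact le_ciSup (Set.finite_range fun k : Fin n => enorm2 (x k.succ - x 0)).bddAbove k

theorem pd2_eq_fderiv_fderiv {n : ℕ} {f : (Fin n → ℝ) → ℝ} {ξ : Fin n → ℝ}
    (hf : DifferentiableAt ℝ (fderiv ℝ f) ξ) (q r : Fin n) :
    pd2 f q r ξ = fderiv ℝ (fderiv ℝ f) ξ (Pi.single r 1) (Pi.single q 1) := by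
  simp [pd2, fderiv_clm_apply hf (differentiableAt_const _)]

theorem abs_fderiv_fderiv_apply_le_of_abs_pd2_le {n : ℕ} {f : (Fin n → ℝ) → ℝ}
    {ξ : Fin n → ℝ} (hf : DifferentiableAt ℝ (fderiv ℝ f) ξ) {β : ℝ}
    (hβ : ∀ q r, |pd2 f q r ξ| ≤ β) (v : Fin n → ℝ) :
    |fderiv ℝ (fderiv ℝ f) ξ v v| ≤ β * (∑ q, |v q|) ^ 2 := by
  have hv : v = ∑ r, v r • (Pi.single r 1 : Fin n → ℝ) := by
    ext i; simp [Pi.single_apply]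
  have hexpand : fderiv ℝ (fderiv ℝ f) ξ v v = ∑ r, ∑ q, v r * (v q * pd2 f r q ξ) := by
    conv_lhs => rw [hv]
    simp [pd2_eq_fderiv_fderiv hf, Finset.mul_sum]
  calc |fderiv ℝ (fderiv ℝ f) ξ v v| ≤ ∑ r, ∑ q, |v r| * (|v q| * β) := by
        rw [hexpand]
        refine (Finset.abs_sum_le_sum_abs _ _).trans (Finset.sum_le_sum fun r _ => ?_)
        refine (Finset.abs_sum_le_sum_abs _ _).trans (Finset.sum_le_sum fun q _ => ?_)
        rw [abs_mul, abs_mul]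
        gcongr
        exact hβ r q
    _ = β * (∑ q, |v q|) ^ 2 := by
        simp only [← Finset.sum_mul, ← Finset.mul_sum]; ring

theorem abs_sub_sub_fderiv_le_of_abs_pd2_le {n : ℕ} {f : (Fin n → ℝ) → ℝ}
    {U s : Set (Fin n → ℝ)} (hU : IsOpen U) (hf : ContDiffOn ℝ 2 f U) (hs : Convex ℝ s)
    (hsU : s ⊆ U) {a b : Fin n → ℝ} (ha : a ∈ s) (hb : b ∈ s) {β : ℝ}
    (hβ : ∀ q r, ∀ ξ ∈ s, |pd2 f q r ξ| ≤ β) :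
    |f b - f a - fderiv ℝ f a (b - a)| ≤ 1 / 2 * β * (∑ q, |b q - a q|) ^ 2 := by
  have hseg : segment ℝ a b ⊆ s := hs.segment_subset ha hb
  have hf2 : ∀ ξ ∈ U, DifferentiableAt ℝ (fderiv ℝ f) ξ := fun ξ hξ =>
    ((hf.fderiv_of_isOpen hU le_rfl).differentiableOn one_ne_zero).differentiableAt
      (hU.mem_nhds hξ)
  have := norm_sub_sub_fderiv_le_of_norm_fderiv_fderiv_le hU hf (hseg.trans hsU) fun ξ hξ =>
    abs_fderiv_fderiv_apply_le_of_abs_pd2_le (hf2 ξ (hsU (hseg hξ)))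
      (fun q r => hβ q r ξ (hseg hξ)) (b - a)
  rw [Real.norm_eq_abs] at this
  simpa [div_eq_inv_mul, mul_assoc] using this

theorem abs_sub_sum_smul_le {n : ℕ} (x : Fin (n + 1) → Fin n → ℝ) {U : Set (Fin n → ℝ)}
    (hU : IsOpen U) (hσU : convexHull ℝ (range x) ⊆ U) {f : (Fin n → ℝ) → ℝ}
    (hf : ContDiffOn ℝ 2 f U) {β : ℝ} (hβ0 : 0 ≤ β)
    (hβ : ∀ q r, ∀ ξ ∈ convexHull ℝ (range x), |pd2 f q r ξ| ≤ β)
    (lam : Fin (n + 1) → ℝ) (hlam0 : ∀ j, 0 ≤ lam j) (hlam1 : ∑ j, lam j = 1) :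
    |f (∑ j, lam j • x j) - ∑ j, lam j * f (x j)| ≤
      1 / 2 * β * ∑ j, lam j * (n * enorm2 (x j - x 0) *
        ((⨆ k : Fin n, enorm2 (x k.succ - x 0)) + enorm2 (x j - x 0))) := by
  set σ := convexHull ℝ (range x)
  have hxσ : ∀ j, x j ∈ σ := fun j => subset_convexHull ℝ _ ⟨j, rfl⟩
  set X := ∑ j, lam j • x j
  have hXσ : X ∈ σ :=
    (convex_convexHull ℝ _).sum_mem (fun j _ => hlam0 j) hlam1 fun j _ => hxσ j
  set e : Fin (n + 1) → ℝ := fun j => enorm2 (x j - x 0)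
  set M := ⨆ k : Fin n, enorm2 (x k.succ - x 0)
  set R : (Fin n → ℝ) → ℝ := fun z => f z - f (x 0) - fderiv ℝ f (x 0) (z - x 0)
  have hR : ∀ z ∈ σ, |R z| ≤ 1 / 2 * β * (n * enorm2 (z - x 0) ^ 2) := fun z hz =>
    (abs_sub_sub_fderiv_le_of_abs_pd2_le hU hf (convex_convexHull ℝ _) hσU (hxσ 0) hz hβ).trans
      (by gcongr; simpa using sq_sum_abs_le_card_mul_enorm2_sq (z - x 0))
  have hXe : enorm2 (X - x 0) ≤ ∑ j, lam j * e j := enorm2_sum_smul_sub_le lam hlam0 hlam1 x (x 0)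
  have heM : ∑ j, lam j * e j ≤ M := calc
    ∑ j, lam j * e j ≤ ∑ j, lam j * M :=
      Finset.sum_le_sum fun j _ => mul_le_mul_of_nonneg_left (enorm2_sub_le_iSup x j) (hlam0 j)
    _ = M := by rw [← Finset.sum_mul, hlam1, one_mul]
  have hRX : |R X| ≤ 1 / 2 * β * (n * ((∑ j, lam j * e j) * M)) := by
    refine (hR X hXσ).trans ?_
    gcongr
    rw [sq]
    exact mul_le_mul hXe (hXe.trans heM) (enorm2_nonneg _) ((enorm2_nonneg _).trans hXe)
  calc |f X - ∑ j, lam j * f (x j)| = |R X - ∑ j, lam j * R (x j)| := by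
        have := sub_sum_smul_eq_sub_sum_smul_remainder f (fderiv ℝ f (x 0)).toLinearMap (x 0) x
          lam hlam1
        simp only [smul_eq_mul, ContinuousLinearMap.coe_coe] at this
        rw [this]
    _ ≤ |R X| + ∑ j, lam j * |R (x j)| := by
        refine (abs_sub _ _).trans (add_le_add_right ((Finset.abs_sum_le_sum_abs _ _).trans_eq
          (Finset.sum_congr rfl fun j _ => ?_)) _)
        rw [abs_mul, abs_of_nonneg (hlam0 j)]
    _ ≤ 1 / 2 * β * (n * ((∑ j, lam j * e j) * M)) +
          ∑ j, lam j * (1 / 2 * β * (n * e j ^ 2)) :=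
        add_le_add hRX (Finset.sum_le_sum fun j _ =>
          mul_le_mul_of_nonneg_left (hR _ (hxσ j)) (hlam0 j))
    _ = 1 / 2 * β * ∑ j, lam j * (n * e j * (M + e j)) := by
        simp only [Finset.mul_sum, Finset.sum_mul, ← Finset.sum_add_distrib]
        exact Finset.sum_congr rfl fun j _ => by ring

theorem cpa_interpolation_error_bound_general
    {n : ℕ} (hn : 0 < n)
    (x : Fin (n + 1) → (Fin n → ℝ))
    (U : Set (Fin n → ℝ)) (hU : IsOpen U)
    (hσU : convexHull ℝ (Set.range x) ⊆ U)
    (g : (Fin n → ℝ) → (Fin n → ℝ)) (hg : ContDiffOn ℝ 2 g U)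
    (β : ℝ)
    (hβ : ∀ (p q r : Fin n), ∀ ξ ∈ convexHull ℝ (Set.range x),
      |pd2 (fun z => g z p) q r ξ| ≤ β)
    (c : Fin (n + 1) → ℝ)
    (hc : ∀ j, c j = n * enorm2 (x j - x 0) *
      ((⨆ k : Fin n, enorm2 (x k.succ - x 0)) + enorm2 (x j - x 0)))
    (lam : Fin (n + 1) → ℝ) (hlam0 : ∀ j, 0 ≤ lam j) (hlam1 : ∑ j, lam j = 1) :
    ‖g (∑ j, lam j • x j) - ∑ j, lam j • g (x j)‖ ≤ (1 / 2) * β * ∑ j, lam j * c j := by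
  let p₀ : Fin n := ⟨0, hn⟩
  have : Nonempty (Fin n) := ⟨p₀⟩
  have hβ0 : 0 ≤ β := (abs_nonneg _).trans (hβ p₀ p₀ p₀ (x 0) (subset_convexHull ℝ _ ⟨0, rfl⟩))
  rw [pi_norm_le_iff_of_nonempty]
  intro p
  have hgp : ContDiffOn ℝ 2 (fun z => g z p) U :=
    (ContinuousLinearMap.proj (R := ℝ) (φ := fun _ : Fin n => ℝ) p).contDiff.comp_contDiffOn hg
  simpa [hc] using abs_sub_sum_smul_le x hU hσU hgp hβ0 (hβ p) lam hlam0 hlam1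

/-- (Proposition 2.2 / Lemma 2.3 of Giesl–Hafstein.) For a `C²` function
`g` on an open set containing the simplex `σ = co{x₀,…,xₙ}`, with `β` bounding all second
partials of the components of `g` on `σ` and
`c_j = n ‖x_j − x₀‖₂ (max_k ‖x_k − x₀‖₂ + ‖x_j − x₀‖₂)`, every convex combination
`x = Σ λ_j x_j` satisfies `‖g(x) − Σ λ_j g(x_j)‖_∞ ≤ ½ β Σ λ_j c_j`. -/
theorem cpa_interpolation_error_bound
    {n : ℕ} (hn : 0 < n)
    (x : Fin (n + 1) → (Fin n → ℝ)) (hx : AffineIndependent ℝ x)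
    (U : Set (Fin n → ℝ)) (hU : IsOpen U)
    (hσU : convexHull ℝ (Set.range x) ⊆ U)
    (g : (Fin n → ℝ) → (Fin n → ℝ)) (hg : ContDiffOn ℝ 2 g U)
    (β : ℝ)
    (hβ : ∀ (p q r : Fin n), ∀ ξ ∈ convexHull ℝ (Set.range x),
      |pd2 (fun z => g z p) q r ξ| ≤ β)
    (c : Fin (n + 1) → ℝ)
    (hc : ∀ j, c j = n * enorm2 (x j - x 0) *
      ((⨆ k : Fin n, enorm2 (x k.succ - x 0)) + enorm2 (x j - x 0)))
    (lam : Fin (n + 1) → ℝ) (hlam0 : ∀ j, 0 ≤ lam j) (hlam1 : ∑ j, lam j = 1) :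
    ‖g (∑ j, lam j • x j) - ∑ j, lam j • g (x j)‖ ≤ (1 / 2) * β * ∑ j, lam j * c j :=
  cpa_interpolation_error_bound_general hn x U hU hσU g hg β hβ c hc lam hlam0 hlam1
end

section
/- Let σ = co{x₀, …, xₙ} ⊂ ℝⁿ be an n-simplex, let φ : U → ℝ and ζ : U → ℝᵐ be twice continuously differentiable on an open set U containing σ, and define for each x the symmetric (1+m)×(1+m) matrix M(x) = [[φ(x), ζ(x)ᵀ], [ζ(x), −I_m]]. Let β ≥ max over q,r ∈ {1,…,n} and ξ ∈ σ of |∂²φ/∂x⁽q⁾∂x⁽r⁾(ξ)|, and for each k ∈ {1,…,m} let μ_k ≥ max over q,r ∈ {1,…,n} and ξ ∈ σ of |∂²ζ⁽ᵏ⁾/∂x⁽q⁾∂x⁽r⁾(ξ)|. For j ∈ {0,…,n} set c_j = n · max_{υ ∈ {0,…,n}} ‖x_j − x_υ‖₂² and E(x_j) = [[(1/2)(β c_j + Σ_{k=1}^{m} μ_k² c_j²), 0], [0, (1/2) I_m]]. Then for every x ∈ σ, writing x = Σ_{j=0}^{n} λ_j x_j as a convex combination of the vertices, the matrix inequality M(x)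 − Σ_{j=0}^{n} λ_j M(x_j) ⪯ Σ_{j=0}^{n} λ_j E(x_j) holds. -/
open Matrix

/-- The LMI `M(x) = [[φ(x), ζ(x)ᵀ], [ζ(x), −I_m]]`. -/
def Mlmi {n m : ℕ} (φ : (Fin n → ℝ) → ℝ) (ζ : (Fin n → ℝ) → (Fin m → ℝ))
    (x : Fin n → ℝ) : Matrix (Fin 1 ⊕ Fin m) (Fin 1 ⊕ Fin m) ℝ :=
  Matrix.fromBlocks
    (Matrix.of fun _ _ => φ x) (Matrix.of fun _ k => ζ x k)
    (Matrix.of fun k _ => ζ x k) (-1)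

/-- The error-bound matrix `E = [[½(β c + Σ_k μ_k² c²), 0], [0, ½ I_m]]`. -/
noncomputable def Elmi {m : ℕ} (β : ℝ) (μ : Fin m → ℝ) (c : ℝ) :
    Matrix (Fin 1 ⊕ Fin m) (Fin 1 ⊕ Fin m) ℝ :=
  Matrix.fromBlocks
    (Matrix.of fun _ _ => (1 / 2) * (β * c + ∑ k, μ k ^ 2 * c ^ 2)) 0
    0 ((1 / 2 : ℝ) • 1)

/-! The matrix `Σ λ_j E(x_j) - (M(x) - Σ λ_j M(x_j))` has lower-right block `½ I`, so by the Schur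
complement it is positive semidefinite as soon as its top-left entry dominates `2 ‖b‖²`, where
`b = Σ λ_j ζ(x_j) - ζ(x)`. Both `φ(x) - Σ λ_j φ(x_j)` and the components of `b` are Jensen gaps of
`C²` functions: expanding each `f(x_j)` around `x = Σ λ_j x_j`, the first-order terms cancel and
the Taylor remainder along `[x, x_j]` is at most `B n ‖x_j - x‖² / 2 ≤ B c_j / 2`, because
`ξ ↦ ‖x_j - ξ‖` is convex and so is largest on the simplex at a vertex. Thus `|b_k| ≤ μ_k S / 2`
with `S = Σ λ_j c_j`, and Jensen's `S² ≤ Σ λ_j c_j²` absorbs `2 ‖b‖²` into the `μ_k²` term. -/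

open Set

theorem norm_sub_sub_deriv_le_of_norm_deriv2_le_s5 {E : Type*} [NormedAddCommGroup E]
    [NormedSpace ℝ E] {g g' g'' : ℝ → E} {C : ℝ}
    (hg : ∀ t ∈ Icc (0 : ℝ) 1, HasDerivAt g (g' t) t)
    (hg' : ∀ t ∈ Icc (0 : ℝ) 1, HasDerivAt g' (g'' t) t)
    (hC : ∀ t ∈ Icc (0 : ℝ) 1, ‖g'' t‖ ≤ C) :
    ‖g 1 - g 0 - g' 0‖ ≤ C / 2 := by
  -- Compare `g t - g 0 - t • g' 0` with `C t² / 2`: the mean value inequality for `g'` shows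
  -- that the derivative `C t` of the latter dominates the derivative of the former.
  have hg'_lip : ∀ t ∈ Icc (0 : ℝ) 1, ‖g' t - g' 0‖ ≤ C * t := by
    simpa using norm_image_sub_le_of_norm_deriv_le_segment'
      (fun t ht => (hg' t ht).hasDerivWithinAt) (fun t ht => hC t (Ico_subset_Icc_self ht))
  have hg_aff : ∀ t ∈ Icc (0 : ℝ) 1,
      HasDerivAt (fun t => g t - g 0 - t • g' 0) (g' t - (1 : ℝ) • g' 0) t := fun t ht =>
    ((hg t ht).sub_const _).fun_sub ((hasDerivAt_id' t).smul_const _)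
  have hB : ∀ t : ℝ, HasDerivAt (fun t => C * t ^ 2 / 2) (C * t) t := fun t =>
    (((hasDerivAt_pow 2 t).const_mul C).div_const 2).congr_deriv (by ring)
  have key := image_norm_le_of_norm_deriv_right_le_deriv_boundary
    (f := fun t => g t - g 0 - t • g' 0) (f' := fun t => g' t - g' 0)
    (B := fun t => C * t ^ 2 / 2) (B' := fun t => C * t)
    (fun t ht => (hg_aff t ht).continuousAt.continuousWithinAt)
    (fun t ht => by simpa using (hg_aff t (Ico_subset_Icc_self ht)).hasDerivWithinAt)
    (by simp)
    hB
    (fun t ht => hg'_lip t (Ico_subset_Icc_self ht))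
    (right_mem_Icc.2 zero_le_one)
  simpa using key

theorem ContinuousLinearMap.pi_apply_eq_sum_single {ι F : Type*} [Fintype ι] [DecidableEq ι]
    [NormedAddCommGroup F] [NormedSpace ℝ F] (L : (ι → ℝ) →L[ℝ] F) (v : ι → ℝ) :
    L v = ∑ i, v i • L (Pi.single i 1) := by
  conv_lhs => rw [pi_eq_sum_univ' v]
  simp [map_sum, map_smul]

theorem abs_sum_sum_mul_mul_le {ι : Type*} [Fintype ι] {H : ι → ι → ℝ} {B : ℝ}
    (hH : ∀ q r, |H q r| ≤ B) {v : ι → ℝ} {R : ℝ} (hv : ∑ q, v q ^ 2 ≤ R) :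
    |∑ q, ∑ r, v q * v r * H q r| ≤ B * Fintype.card ι * R := by
  rcases isEmpty_or_nonempty ι with hempty | ⟨⟨i⟩⟩
  · simp
  have hB : 0 ≤ B := (abs_nonneg _).trans (hH i i)
  calc |∑ q, ∑ r, v q * v r * H q r|
      ≤ ∑ q, ∑ r, |v q| * |v r| * B := by
        refine (Finset.abs_sum_le_sum_abs _ _).trans (Finset.sum_le_sum fun q _ => ?_)
        refine (Finset.abs_sum_le_sum_abs _ _).trans (Finset.sum_le_sum fun r _ => ?_)
        rw [abs_mul, abs_mul]
        exact mul_le_mul_of_nonneg_left (hH q r) (by positivity)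
    _ = B * (∑ q, |v q|) ^ 2 := by
        rw [sq, Finset.sum_mul_sum, Finset.mul_sum]
        simp only [Finset.mul_sum]
        exact Finset.sum_congr rfl fun q _ => Finset.sum_congr rfl fun r _ => by ring
    _ ≤ B * (Fintype.card ι * ∑ q, v q ^ 2) := by
        gcongr
        simpa using sq_sum_le_card_mul_sum_sq (s := Finset.univ) (f := fun q => |v q|)
    _ ≤ B * Fintype.card ι * R := by
        rw [mul_assoc]; gcongr

section SecondPartials

variable {n : ℕ} {f : (Fin n → ℝ) → ℝ} {U : Set (Fin n → ℝ)}

theorem differentiableAt_fderiv_apply (hU : IsOpen U) (hf : ContDiffOn ℝ 2 f U)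
    {ξ : Fin n → ℝ} (hξ : ξ ∈ U) (w : Fin n → ℝ) :
    DifferentiableAt ℝ (fun y => fderiv ℝ f y w) ξ :=
  (((hf.fderiv_of_isOpen hU (by norm_num)).contDiffAt (hU.mem_nhds hξ)).differentiableAt
    one_ne_zero).clm_apply (differentiableAt_const w)

theorem fderiv_fderiv_apply_eq_sum_pd2 (hU : IsOpen U) (hf : ContDiffOn ℝ 2 f U)
    {ξ : Fin n → ℝ} (hξ : ξ ∈ U) (v : Fin n → ℝ) :
    fderiv ℝ (fun y => fderiv ℝ f y v) ξ v = ∑ q, ∑ r, v q * v r * pd2 f q r ξ := by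
  have hpartial := differentiableAt_fderiv_apply hU hf hξ
  have hexpand : (fun y => fderiv ℝ f y v) = fun y => ∑ q, v q * fderiv ℝ f y (Pi.single q 1) :=
    funext fun y => (fderiv ℝ f y).pi_apply_eq_sum_single v
  rw [hexpand, fderiv_fun_sum fun q _ => (hpartial _).const_mul (v q), _root_.sum_apply]
  refine Finset.sum_congr rfl fun q _ => ?_
  rw [fderiv_const_mul (hpartial _), _root_.smul_apply,
    ContinuousLinearMap.pi_apply_eq_sum_single, smul_eq_mul, Finset.mul_sum]
  exact Finset.sum_congr rfl fun r _ => by rw [pd2, smul_eq_mul]; ring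

theorem abs_sub_sub_fderiv_le (hU : IsOpen U) (hf : ContDiffOn ℝ 2 f U)
    {s : Set (Fin n → ℝ)} (hs : Convex ℝ s) (hsU : s ⊆ U) {p y : Fin n → ℝ}
    (hp : p ∈ s) (hy : y ∈ s) {B R : ℝ} (hB : ∀ q r, ∀ ξ ∈ s, |pd2 f q r ξ| ≤ B)
    (hR : ∑ q, (y q - p q) ^ 2 ≤ R) :
    |f y - f p - fderiv ℝ f p (y - p)| ≤ B * n * R / 2 := by
  set v := y - p
  have hseg : ∀ t ∈ Icc (0 : ℝ) 1, p + t • v ∈ s := fun t ht =>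
    hs.add_smul_sub_mem hp hy ht
  have hline : ∀ t : ℝ, HasDerivAt (fun t : ℝ => p + t • v) v t := fun t => by
    simpa using ((hasDerivAt_id t).smul_const v).const_add p
  have hg : ∀ t ∈ Icc (0 : ℝ) 1,
      HasDerivAt (fun t => f (p + t • v)) (fderiv ℝ f (p + t • v) v) t := fun t ht =>
    ((hf.differentiableOn (by norm_num) _ (hsU (hseg t ht))).differentiableAt
      (hU.mem_nhds (hsU (hseg t ht)))).hasFDerivAt.comp_hasDerivAt t (hline t)
  have hg' : ∀ t ∈ Icc (0 : ℝ) 1, HasDerivAt (fun t => fderiv ℝ f (p + t • v) v)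
      (∑ q, ∑ r, v q * v r * pd2 f q r (p + t • v)) t := fun t ht => by
    rw [← fderiv_fderiv_apply_eq_sum_pd2 hU hf (hsU (hseg t ht))]
    exact (differentiableAt_fderiv_apply hU hf (hsU (hseg t ht)) v).hasFDerivAt.comp_hasDerivAt
      t (hline t)
  have hC : ∀ t ∈ Icc (0 : ℝ) 1,
      ‖∑ q, ∑ r, v q * v r * pd2 f q r (p + t • v)‖ ≤ B * n * R := fun t ht => by
    simpa using abs_sum_sum_mul_mul_le (fun q r => hB q r _ (hseg t ht)) (v := v)
      (by simpa [v] using hR)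
  simpa [v] using norm_sub_sub_deriv_le_of_norm_deriv2_le_s5 hg hg' hC

end SecondPartials

theorem abs_sub_sum_le_of_remainder_le {E ι : Type*} [AddCommGroup E] [Module ℝ E] [Fintype ι]
    (f : E → ℝ) (L : E →ₗ[ℝ] ℝ) (x : ι → E) {lam : ι → ℝ} (h0 : ∀ j, 0 ≤ lam j)
    (h1 : ∑ j, lam j = 1) {r : ι → ℝ}
    (hr : ∀ j, |f (x j) - f (∑ i, lam i • x i) - L (x j - ∑ i, lam i • x i)| ≤ r j) :
    |f (∑ i, lam i • x i) - ∑ j, lam j * f (x j)| ≤ ∑ j, lam j * r j := by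
  set xbar := ∑ i, lam i • x i
  have hL : ∑ j, lam j * L (x j - xbar) = 0 := by
    have hcentred : ∑ j, lam j • (x j - xbar) = 0 := by
      simp [smul_sub, Finset.sum_sub_distrib, ← Finset.sum_smul, h1, xbar]
    simpa [map_sum] using congrArg L hcentred
  have hgap : f xbar - ∑ j, lam j * f (x j)
      = -∑ j, lam j * (f (x j) - f xbar - L (x j - xbar)) := by
    simp only [mul_sub, Finset.sum_sub_distrib, hL, ← Finset.sum_mul, h1]
    ring
  rw [hgap, abs_neg]
  refine (Finset.abs_sum_le_sum_abs _ _).trans (Finset.sum_le_sum fun j _ => ?_)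
  rw [abs_mul, abs_of_nonneg (h0 j)]
  exact mul_le_mul_of_nonneg_left (hr j) (h0 j)

theorem enorm2_sq {n : ℕ} (v : Fin n → ℝ) : enorm2 v ^ 2 = ∑ i, v i ^ 2 :=
  Real.sq_sqrt (by positivity)

theorem enorm2_sub_eq_dist {n : ℕ} (a y : Fin n → ℝ) :
    enorm2 (a - y) = dist (WithLp.toLp 2 y : EuclideanSpace ℝ (Fin n)) (WithLp.toLp 2 a) := by
  simp [enorm2, EuclideanSpace.dist_eq, Real.dist_eq, sq_abs, abs_sub_comm]

theorem sum_sq_sub_le_iSup_enorm2_sq {ι : Type*} [Finite ι] {n : ℕ} (x : ι → Fin n → ℝ)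
    {ξ : Fin n → ℝ} (hξ : ξ ∈ convexHull ℝ (range x)) (a : Fin n → ℝ) :
    ∑ q, (a q - ξ q) ^ 2 ≤ ⨆ υ, enorm2 (a - x υ) ^ 2 := by
  have hconv : ConvexOn ℝ univ fun y => enorm2 (a - y) := by
    simpa [Function.comp_def, enorm2_sub_eq_dist] using
      (convexOn_univ_dist (WithLp.toLp 2 a : EuclideanSpace ℝ (Fin n))).comp_linearMap
        (WithLp.linearEquiv 2 ℝ (Fin n → ℝ)).symm.toLinearMap
  obtain ⟨_, ⟨υ, rfl⟩, hυ⟩ := hconv.exists_ge_of_mem_convexHull (subset_univ _) hξ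
  calc ∑ q, (a q - ξ q) ^ 2 = enorm2 (a - ξ) ^ 2 := by simp [enorm2_sq]
    _ ≤ enorm2 (a - x υ) ^ 2 := pow_le_pow_left₀ (Real.sqrt_nonneg _) hυ 2
    _ ≤ ⨆ υ, enorm2 (a - x υ) ^ 2 := le_ciSup (f := fun υ => enorm2 (a - x υ) ^ 2)
        (finite_range _).bddAbove υ

theorem abs_map_sum_smul_sub_sum_le {ι : Type*} [Fintype ι] {n : ℕ} {f : (Fin n → ℝ) → ℝ}
    {U : Set (Fin n → ℝ)} (hU : IsOpen U) (hf : ContDiffOn ℝ 2 f U) (x : ι → Fin n → ℝ)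
    (hxU : convexHull ℝ (range x) ⊆ U) {B : ℝ}
    (hB : ∀ q r, ∀ ξ ∈ convexHull ℝ (range x), |pd2 f q r ξ| ≤ B)
    {lam : ι → ℝ} (h0 : ∀ j, 0 ≤ lam j) (h1 : ∑ j, lam j = 1) :
    |f (∑ j, lam j • x j) - ∑ j, lam j * f (x j)|
      ≤ B / 2 * ∑ j, lam j * (n * ⨆ υ, enorm2 (x j - x υ) ^ 2) := by
  have hvertex : ∀ j, x j ∈ convexHull ℝ (range x) := fun j =>
    subset_convexHull ℝ _ (mem_range_self j)
  have hxbar : ∑ j, lam j • x j ∈ convexHull ℝ (range x) :=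
    (convex_convexHull ℝ _).sum_mem (fun j _ => h0 j) h1 fun j _ => hvertex j
  refine (abs_sub_sum_le_of_remainder_le f (fderiv ℝ f (∑ j, lam j • x j) : _ →ₗ[ℝ] ℝ) x h0 h1
    fun j => abs_sub_sub_fderiv_le hU hf (convex_convexHull ℝ _) hxU hxbar (hvertex j) hB
      (sum_sq_sub_le_iSup_enorm2_sq x hxbar (x j))).trans_eq ?_
  rw [Finset.mul_sum]
  exact Finset.sum_congr rfl fun j _ => by ring

theorem posSemidef_fromBlocks_of_two_mul_sum_sq_le {κ : Type*} [Fintype κ] [DecidableEq κ]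
    {a : ℝ} {b : κ → ℝ} (h : 2 * ∑ k, b k ^ 2 ≤ a) :
    (fromBlocks (of fun (_ _ : Fin 1) => a) (of fun _ k => b k)
      (of fun k _ => b k) ((1 / 2 : ℝ) • 1)).PosSemidef := by
  have hD : ((1 / 2 : ℝ) • (1 : Matrix κ κ ℝ)).PosDef := PosDef.one.smul (by norm_num)
  have hDinv : ((1 / 2 : ℝ) • (1 : Matrix κ κ ℝ))⁻¹ = (2 : ℝ) • 1 :=
    Matrix.inv_eq_left_inv (by rw [smul_mul_smul, one_mul]; norm_num)
  let := hD.isUnit.invertible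
  have hBt : (of fun k (_ : Fin 1) => b k) = (of fun (_ : Fin 1) k => b k)ᴴ := by
    ext; simp
  rw [hBt, PosDef.fromBlocks₂₂ _ _ hD, hDinv]
  have hschur : of (fun (_ _ : Fin 1) => a) - of (fun (_ : Fin 1) k => b k)
      * (2 : ℝ) • (1 : Matrix κ κ ℝ) * (of fun (_ : Fin 1) k => b k)ᴴ
      = Matrix.diagonal fun _ => a - 2 * ∑ k, b k ^ 2 := by
    ext i j
    fin_cases i; fin_cases j
    simp [mul_apply, Finset.mul_sum, sq, mul_assoc]
  rw [hschur, posSemidef_diagonal_iff]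
  exact fun _ => sub_nonneg.2 h

theorem sum_smul_Elmi_sub_Mlmi_sub_sum_smul_Mlmi {ι : Type*} [Fintype ι] {n m : ℕ}
    (φ : (Fin n → ℝ) → ℝ) (ζ : (Fin n → ℝ) → (Fin m → ℝ)) (β : ℝ) (μ : Fin m → ℝ)
    (x : ι → Fin n → ℝ) (c lam : ι → ℝ) (h1 : ∑ j, lam j = 1) :
    (∑ j, lam j • Elmi β μ (c j))
        - (Mlmi φ ζ (∑ j, lam j • x j) - ∑ j, lam j • Mlmi φ ζ (x j))
      = fromBlocks
          (of fun _ _ => β / 2 * ∑ j, lam j * c j + 1 / 2 * ∑ k, μ k ^ 2 * ∑ j, lam j * c j ^ 2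
            - (φ (∑ j, lam j • x j) - ∑ j, lam j * φ (x j)))
          (of fun _ k => ∑ j, lam j * ζ (x j) k - ζ (∑ j, lam j • x j) k)
          (of fun k _ => ∑ j, lam j * ζ (x j) k - ζ (∑ j, lam j • x j) k)
          ((1 / 2 : ℝ) • 1) := by
  ext (i | k) (i' | l)
  · simp [Elmi, Mlmi, Matrix.sum_apply, Finset.mul_sum, Finset.sum_add_distrib, mul_add]
    rw [Finset.sum_comm (s := Finset.univ (α := Fin m))]
    congr 1 <;> refine Finset.sum_congr rfl fun _ _ => ?_
    · ring
    · exact Finset.sum_congr rfl fun _ _ => by ring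
  · simp [Elmi, Mlmi, Matrix.sum_apply]
  · simp [Elmi, Mlmi, Matrix.sum_apply]
  · by_cases hkl : k = l
    · simp [Elmi, Mlmi, Matrix.sum_apply, hkl, ← Finset.sum_mul, h1]
    · simp [Elmi, Mlmi, Matrix.sum_apply, hkl]

theorem lmi_error_bound_on_simplex_general
    {n m : ℕ}
    (x : Fin (n + 1) → (Fin n → ℝ))
    (U : Set (Fin n → ℝ)) (hU : IsOpen U)
    (hσU : convexHull ℝ (Set.range x) ⊆ U)
    (φ : (Fin n → ℝ) → ℝ) (hφ : ContDiffOn ℝ 2 φ U)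
    (ζ : (Fin n → ℝ) → (Fin m → ℝ)) (hζ : ContDiffOn ℝ 2 ζ U)
    (β : ℝ)
    (hβ : ∀ (q r : Fin n), ∀ ξ ∈ convexHull ℝ (Set.range x), |pd2 φ q r ξ| ≤ β)
    (μ : Fin m → ℝ)
    (hμ : ∀ (k : Fin m) (q r : Fin n), ∀ ξ ∈ convexHull ℝ (Set.range x),
      |pd2 (fun z => ζ z k) q r ξ| ≤ μ k)
    (c : Fin (n + 1) → ℝ)
    (hc : ∀ j, c j = n * (⨆ υ : Fin (n + 1), enorm2 (x j - x υ) ^ 2))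
    (lam : Fin (n + 1) → ℝ) (hlam0 : ∀ j, 0 ≤ lam j) (hlam1 : ∑ j, lam j = 1) :
    ((∑ j, lam j • Elmi β μ (c j))
      - (Mlmi φ ζ (∑ j, lam j • x j) - ∑ j, lam j • Mlmi φ ζ (x j))).PosSemidef := by
  rw [sum_smul_Elmi_sub_Mlmi_sub_sum_smul_Mlmi φ ζ β μ x c lam hlam1]
  refine posSemidef_fromBlocks_of_two_mul_sum_sq_le ?_
  set xbar := ∑ j, lam j • x j
  set S := ∑ j, lam j * c j
  set T := ∑ j, lam j * c j ^ 2
  have hφgap : |φ xbar - ∑ j, lam j * φ (x j)| ≤ β / 2 * S := by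
    simpa only [← hc] using abs_map_sum_smul_sub_sum_le hU hφ x hσU hβ hlam0 hlam1
  have hζgap (k : Fin m) : |∑ j, lam j * ζ (x j) k - ζ xbar k| ≤ μ k / 2 * S := by
    rw [abs_sub_comm]
    simpa only [← hc] using
      abs_map_sum_smul_sub_sum_le hU (contDiffOn_pi.1 hζ k) x hσU (hμ k) hlam0 hlam1
  have hST : S ^ 2 ≤ T := by
    simpa using (even_two.convexOn_pow (𝕜 := ℝ)).map_sum_le (fun j _ => hlam0 j) hlam1
      (p := c) (by simp)
  calc 2 * ∑ k, (∑ j, lam j * ζ (x j) k - ζ xbar k) ^ 2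
      ≤ 2 * ∑ k, (μ k / 2 * S) ^ 2 := by
        refine mul_le_mul_of_nonneg_left (Finset.sum_le_sum fun k _ => ?_) zero_le_two
        exact sq_le_sq' (abs_le.1 (hζgap k)).1 (abs_le.1 (hζgap k)).2
    _ ≤ (1 / 2) * ∑ k, μ k ^ 2 * T := by
        rw [Finset.mul_sum, Finset.mul_sum]
        refine Finset.sum_le_sum fun k _ => ?_
        nlinarith [mul_le_mul_of_nonneg_left hST (sq_nonneg (μ k))]
    _ ≤ _ := by
        linarith [(abs_le.1 hφgap).2]

/-- (LMI error bound on a simplex, Theorem 1 of the paper, first part.)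
For `C²` functions `φ, ζ` on an open set containing the simplex `σ = co{x₀,…,xₙ}`,
with `β, μ_k` bounding the second partials on `σ` and
`c_j = n · max_υ ‖x_j − x_υ‖₂²`, every convex combination `x = Σ λ_j x_j` satisfies
`M(x) − Σ λ_j M(x_j) ⪯ Σ λ_j E(x_j)` in the Loewner order. -/
theorem lmi_error_bound_on_simplex
    {n m : ℕ} (hn : 0 < n)
    (x : Fin (n + 1) → (Fin n → ℝ)) (hx : AffineIndependent ℝ x)
    (U : Set (Fin n → ℝ)) (hU : IsOpen U)
    (hσU : convexHull ℝ (Set.range x) ⊆ U)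
    (φ : (Fin n → ℝ) → ℝ) (hφ : ContDiffOn ℝ 2 φ U)
    (ζ : (Fin n → ℝ) → (Fin m → ℝ)) (hζ : ContDiffOn ℝ 2 ζ U)
    (β : ℝ)
    (hβ : ∀ (q r : Fin n), ∀ ξ ∈ convexHull ℝ (Set.range x), |pd2 φ q r ξ| ≤ β)
    (μ : Fin m → ℝ)
    (hμ : ∀ (k : Fin m) (q r : Fin n), ∀ ξ ∈ convexHull ℝ (Set.range x),
      |pd2 (fun z => ζ z k) q r ξ| ≤ μ k)
    (c : Fin (n + 1) → ℝ)
    (hc : ∀ j, c j = n * (⨆ υ : Fin (n + 1), enorm2 (x j - x υ) ^ 2))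
    (lam : Fin (n + 1) → ℝ) (hlam0 : ∀ j, 0 ≤ lam j) (hlam1 : ∑ j, lam j = 1) :
    ((∑ j, lam j • Elmi β μ (c j))
      - (Mlmi φ ζ (∑ j, lam j • x j) - ∑ j, lam j • Mlmi φ ζ (x j))).PosSemidef :=
  lmi_error_bound_on_simplex_general x U hU hσU φ hφ ζ hζ β hβ μ hμ c hc lam hlam0 hlam1
end
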